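/- Let (X,d,μ) satisfy BG(K,N) (Bishop–Gromov volume comparison with model volumes V_{K,N}), with X containing at least two points, and suppose balls have positive finite measure. Then for every x ∈ X and R₀ > 0 there exists C > 0 such that μ(B(x,r)) ≤ C·r for all 0 < r < R₀. Moreover C can be chosen uniformly for x' in a neighborhood of x. -/

import Mathlib

/-!
Pick `y ≠ x` at distance `ρ`. For `x'` near `x` and small `r`, with `d = dist x' y`, the ball
`B(x', r)` lies in the annulus `B(y, d + r) \ B(y, d - r)`, so Bishop–Gromov bounds its measure by
`(V (d + r) - V (d - r)) / V (d - r) · μ(B(y, d - r))`, which is `O(r)` because `V` is Lipschitz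
near `ρ`. For `r` bounded away from `0` the trivial bound `μ(B(x, R₀ + δ))` is already linear.
-/

open MeasureTheory Metric

section

variable {X : Type*} [PseudoMetricSpace X] [MeasurableSpace X] (μ : Measure X)

theorem measure_ball_add_measure_ball_le [OpensMeasurableSpace X] {x y : X} {r s R : ℝ}
    (hr : 0 ≤ r) (hs : r + s ≤ dist x y) (hR : dist x y + r ≤ R) :
    μ (ball x r) + μ (ball y s) ≤ μ (ball y R) := by
  rw [← measure_union (ball_disjoint_ball hs) measurableSet_ball]
  refine measure_mono (Set.union_subset (ball_subset_ball' ?_) (ball_subset_ball ?_))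
  · linarith
  · linarith

theorem measure_ball_toReal_le_of_ratio_le [OpensMeasurableSpace X] {x y : X} {r s R p q : ℝ}
    (hr : 0 ≤ r) (hs : r + s ≤ dist x y) (hR : dist x y + r ≤ R) (hpos : 0 < μ (ball y s))
    (hfin : μ (ball y R) ≠ ⊤) (hq : 0 < q)
    (hratio : (μ (ball y R)).toReal / (μ (ball y s)).toReal ≤ p / q) :
    (μ (ball x r)).toReal ≤ (p - q) / q * (μ (ball y s)).toReal := by
  have hsub := measure_ball_add_measure_ball_le μ hr hs hR
  have hfin_s : μ (ball y s) ≠ ⊤ := ne_top_of_le_ne_top hfin (le_of_add_le_right hsub)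
  have hsum : (μ (ball x r)).toReal + (μ (ball y s)).toReal ≤ (μ (ball y R)).toReal := by
    rw [← ENNReal.toReal_add (ne_top_of_le_ne_top hfin (le_of_add_le_left hsub)) hfin_s]
    exact ENNReal.toReal_mono hfin hsub
  have hball : (μ (ball y R)).toReal ≤ p / q * (μ (ball y s)).toReal :=
    (div_le_iff₀ (ENNReal.toReal_pos hpos.ne' hfin_s)).mp hratio
  calc (μ (ball x r)).toReal ≤ p / q * (μ (ball y s)).toReal - (μ (ball y s)).toReal := by
        linarith
    _ = (p - q) / q * (μ (ball y s)).toReal := by field_simp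

theorem exists_measure_ball_toReal_le_mul_of_lipschitz_near [OpensMeasurableSpace X]
    (V : ℝ → ℝ) (hVpos : ∀ r : ℝ, 0 < r → 0 < V r)
    (hVmono : ∀ r s : ℝ, 0 < r → r ≤ s → V r ≤ V s)
    {x y : X} (hxy : 0 < dist x y) {ε L : ℝ} (hε : 0 < ε)
    (hL : ∀ a ∈ Set.Ioo (dist x y - ε) (dist x y + ε),
      ∀ b ∈ Set.Ioo (dist x y - ε) (dist x y + ε), |V a - V b| ≤ L * |a - b|)
    (hpos : ∀ r : ℝ, 0 < r → 0 < μ (ball y r))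
    (hfin : ∀ r : ℝ, 0 < r → μ (ball y r) ≠ ⊤)
    (hBG : ∀ r R : ℝ, 0 < r → r < R →
      (μ (ball y R)).toReal / (μ (ball y r)).toReal ≤ V R / V r) :
    ∃ C, ∃ δ > 0, ∀ x' : X, dist x x' < δ → ∀ r : ℝ, 0 < r → r < δ →
      (μ (ball x' r)).toReal ≤ C * r := by
  set ρ := dist x y
  set M := (μ (ball y (2 * ρ))).toReal
  -- `δ ≤ ε / 2` keeps `d ± r` in the Lipschitz window, `δ ≤ ρ / 4` keeps `d - r ≥ ρ / 2`.
  set δ := min (ρ / 4) (ε / 2)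
  have hδρ : δ ≤ ρ / 4 := min_le_left _ _
  have hδε : δ ≤ ε / 2 := min_le_right _ _
  refine ⟨2 * L * M / V (ρ / 2), δ, by positivity, fun x' hx' r hr hrδ => ?_⟩
  set d := dist x' y
  have hdρ := abs_lt.mp ((abs_dist_sub_le x' x y).trans_lt (dist_comm x x' ▸ hx'))
  have hsd : 0 < d - r := by linarith
  have hball := measure_ball_toReal_le_of_ratio_le μ hr.le (by linarith) le_rfl (hpos _ hsd)
    (hfin _ (by linarith)) (hVpos _ hsd) (hBG _ _ hsd (by linarith))
  have hVgrowth : V (d + r) - V (d - r) ≤ L * (2 * r) := by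
    have h := hL (d + r) ⟨by linarith, by linarith⟩ (d - r) ⟨by linarith, by linarith⟩
    rw [show d + r - (d - r) = 2 * r by ring, abs_of_pos (show (0 : ℝ) < 2 * r by linarith)] at h
    exact (le_abs_self _).trans h
  have hVρ : 0 < V (ρ / 2) := hVpos _ (by positivity)
  have hVinner : V (ρ / 2) ≤ V (d - r) := hVmono _ _ (by linarith) (by linarith)
  have hM : (μ (ball y (d - r))).toReal ≤ M :=
    ENNReal.toReal_mono (hfin _ (by linarith)) (measure_mono (ball_subset_ball (by linarith)))
  have hVnonneg : 0 ≤ V (d + r) - V (d - r) := sub_nonneg.mpr (hVmono _ _ hsd (by linarith))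
  calc (μ (ball x' r)).toReal
      ≤ (V (d + r) - V (d - r)) / V (d - r) * (μ (ball y (d - r))).toReal := hball
    _ ≤ L * (2 * r) / V (ρ / 2) * M :=
        mul_le_mul (div_le_div₀ (hVnonneg.trans hVgrowth) hVgrowth hVρ hVinner) hM
          ENNReal.toReal_nonneg (div_nonneg (hVnonneg.trans hVgrowth) hVρ.le)
    _ = 2 * L * M / V (ρ / 2) * r := by ring

theorem exists_measure_ball_toReal_le_mul_of_small_radius {x : X}
    (hfin : ∀ R : ℝ, 0 < R → μ (ball x R) ≠ ⊤) {C δ : ℝ} (hδ : 0 < δ)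
    (hsmall : ∀ x' : X, dist x x' < δ → ∀ r : ℝ, 0 < r → r < δ →
      (μ (ball x' r)).toReal ≤ C * r) (R₀ : ℝ) :
    ∃ C' > 0, ∀ x' : X, dist x x' < δ → ∀ r : ℝ, 0 < r → r < R₀ →
      (μ (ball x' r)).toReal ≤ C' * r := by
  set M := (μ (ball x (R₀ + δ))).toReal
  refine ⟨max C (M / δ) + 1, by positivity, fun x' hx' r hr hrR₀ => ?_⟩
  rcases lt_or_ge r δ with hrδ | hδr
  · calc (μ (ball x' r)).toReal ≤ C * r := hsmall x' hx' r hr hrδ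
      _ ≤ (max C (M / δ) + 1) * r := by gcongr; linarith [le_max_left C (M / δ)]
  · have hM : (μ (ball x' r)).toReal ≤ M := by
      refine ENNReal.toReal_mono (hfin _ (by linarith)) (measure_mono (ball_subset_ball' ?_))
      rw [dist_comm]; linarith
    calc (μ (ball x' r)).toReal ≤ M / δ * δ := by rwa [div_mul_cancel₀ M hδ.ne']
      _ ≤ (max C (M / δ) + 1) * r := by
          gcongr; linarith [le_max_right C (M / δ)]

end

theorem bishop_gromov_linear_volume_bound
    {X : Type*} [MetricSpace X] [MeasurableSpace X] [BorelSpace X] [Nontrivial X]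
    (μ : Measure X) (V : ℝ → ℝ)
    (hVpos : ∀ r : ℝ, 0 < r → 0 < V r)
    (hVmono : ∀ r s : ℝ, 0 < r → r ≤ s → V r ≤ V s)
    (hVlip : ∀ r : ℝ, 0 < r → ∃ ε₀ > 0, ∃ L : ℝ,
      ∀ a ∈ Set.Ioo (r - ε₀) (r + ε₀), ∀ b ∈ Set.Ioo (r - ε₀) (r + ε₀),
        |V a - V b| ≤ L * |a - b|)
    (hpos : ∀ (x : X) (r : ℝ), 0 < r → 0 < μ (ball x r))
    (hfin : ∀ (x : X) (r : ℝ), 0 < r → μ (ball x r) ≠ ⊤)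
    (hBG : ∀ (x : X) (r R : ℝ), 0 < r → r < R →
      (μ (ball x R)).toReal / (μ (ball x r)).toReal ≤ V R / V r) :
    ∀ (x : X) (R₀ : ℝ), 0 < R₀ →
      ∃ C > 0, ∃ δ > 0, ∀ x' : X, dist x x' < δ →
        ∀ r : ℝ, 0 < r → r < R₀ → (μ (ball x' r)).toReal ≤ C * r := by
  intro x R₀ _
  obtain ⟨y, hy⟩ := exists_ne x
  have hxy : 0 < dist x y := dist_pos.mpr hy.symm
  obtain ⟨ε, hε, L, hL⟩ := hVlip _ hxy
  obtain ⟨C, δ, hδ, hsmall⟩ := exists_measure_ball_toReal_le_mul_of_lipschitz_near μ V hVpos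
    hVmono hxy hε hL (hpos y) (hfin y) (hBG y)
  obtain ⟨C', hC', hbound⟩ :=
    exists_measure_ball_toReal_le_mul_of_small_radius μ (hfin x) hδ hsmall R₀
  exact ⟨C', hC', δ, hδ, hbound⟩
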